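/- arXiv:math/9910051 — 4 statements merged into one kernel-verified Lean document; each statement's English description precedes it below -/
import Mathlib

section
/- Let U ⊆ ℝⁿ be open, let g : U → ℝ be a smooth function with g(x) > 0 for all x ∈ U, and for 1 ≤ i ≤ n define ∇_i ψ := ∂_i ψ + (1/4)(∂_i log g)·ψ on smooth ψ : U → ℂ. Then for every i and all smooth compactly supported ψ₁, ψ₂ : U → ℂ: ∫_U g(x)^{1/2}·conj(ψ₁(x))·(√(-1)·(∇_i ψ₂)(x)) dx = ∫_U g(x)^{1/2}·conj(√(-1)·(∇_i ψ₁)(x))·ψ₂(x) dx. -/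
open MeasureTheory Complex

/-- `pd i f x` is the `i`-th partial derivative `∂_i f (x)` on `ℝⁿ`. -/
noncomputable def pd {n : ℕ} (i : Fin n) (f : (Fin n → ℝ) → ℂ) (x : Fin n → ℝ) : ℂ :=
  fderiv ℝ f x (Pi.single i 1)

/-- The anti-self-adjoint connection `∇_i ψ = ∂_i ψ + (1/4)(∂_i log g)·ψ`. -/
noncomputable def nablaSA {n : ℕ} (g : (Fin n → ℝ) → ℝ) (i : Fin n)
    (ψ : (Fin n → ℝ) → ℂ) (x : Fin n → ℝ) : ℂ :=
  pd i ψ x + (1 / 4 : ℂ) * pd i (fun y => (Real.log (g y) : ℂ)) x * ψ x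

private lemma cont_of_two_opens {X Y : Type*} [TopologicalSpace X] [TopologicalSpace Y]
    {f : X → Y} {U V : Set X} (hU : IsOpen U) (hV : IsOpen V)
    (hcov : ∀ x, x ∈ U ∨ x ∈ V) (h1 : ContinuousOn f U) (h2 : ContinuousOn f V) :
    Continuous f := by
  rw [continuous_iff_continuousAt]; intro x
  rcases hcov x with hx | hx
  exacts [h1.continuousAt (hU.mem_nhds hx), h2.continuousAt (hV.mem_nhds hx)]

theorem momentum_symmetric {n : ℕ} (U : Set (Fin n → ℝ)) (hU : IsOpen U)
    (g : (Fin n → ℝ) → ℝ) (hg : ContDiffOn ℝ (⊤ : ℕ∞) g U) (hgpos : ∀ x ∈ U, 0 < g x)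
    (ψ₁ ψ₂ : (Fin n → ℝ) → ℂ)
    (hψ₁ : ContDiffOn ℝ (⊤ : ℕ∞) ψ₁ U) (hψ₂ : ContDiffOn ℝ (⊤ : ℕ∞) ψ₂ U)
    (hc₁ : HasCompactSupport ψ₁) (hc₂ : HasCompactSupport ψ₂)
    (hs₁ : tsupport ψ₁ ⊆ U) (hs₂ : tsupport ψ₂ ⊆ U)
    (i : Fin n) :
    (∫ x in U, ((g x ^ (1 / 2 : ℝ) : ℝ) : ℂ) * (starRingEnd ℂ) (ψ₁ x) *
        (Complex.I * nablaSA g i ψ₂ x))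
      = ∫ x in U, ((g x ^ (1 / 2 : ℝ) : ℝ) : ℂ) *
          (starRingEnd ℂ) (Complex.I * nablaSA g i ψ₁ x) * ψ₂ x := by
  classical
  set v : Fin n → ℝ := Pi.single i 1 with hv
  set S : (Fin n → ℝ) → ℂ := fun y => ((g y ^ (1 / 2 : ℝ) : ℝ) : ℂ) with hSdef
  set F : (Fin n → ℝ) → ℂ := fun y => S y * (starRingEnd ℂ) (ψ₁ y) * ψ₂ y with hFdef
  have hgne : ∀ x ∈ U, g x ≠ 0 := fun x hx => (hgpos x hx).ne'
  have hz₁ : ∀ x, x ∉ U → ψ₁ x = 0 := fun x hx =>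
    image_eq_zero_of_notMem_tsupport (fun h => hx (hs₁ h))
  have hz₂ : ∀ x, x ∉ U → ψ₂ x = 0 := fun x hx =>
    image_eq_zero_of_notMem_tsupport (fun h => hx (hs₂ h))
  -- smoothness facts on U
  have hScd : ContDiffOn ℝ (⊤ : ℕ∞) S U :=
    Complex.ofRealCLM.contDiff.comp_contDiffOn (hg.rpow_const_of_ne hgne)
  have hLcd : ContDiffOn ℝ (⊤ : ℕ∞) (fun y => (Real.log (g y) : ℂ)) U :=
    Complex.ofRealCLM.contDiff.comp_contDiffOn (hg.log hgne)
  have hconj₁cd : ContDiffOn ℝ (⊤ : ℕ∞) (fun y => (starRingEnd ℂ) (ψ₁ y)) U := by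
    exact Complex.conjCLE.contDiff.comp_contDiffOn hψ₁
  have hFcd : ContDiffOn ℝ (⊤ : ℕ∞) F U := (hScd.mul hconj₁cd).mul hψ₂
  -- F vanishes near points off U
  have hFzero : ∀ x ∈ (tsupport ψ₁)ᶜ, F x = 0 := by
    intro x hx
    simp [hFdef, image_eq_zero_of_notMem_tsupport hx]
  have hW₁ : IsOpen (tsupport ψ₁)ᶜ := (isClosed_tsupport ψ₁).isOpen_compl
  have hcov : ∀ x, x ∈ U ∨ x ∈ (tsupport ψ₁)ᶜ := by
    intro x
    by_cases hx : x ∈ U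
    · exact Or.inl hx
    · exact Or.inr (fun h => hx (hs₁ h))
  have hFev : ∀ x ∈ (tsupport ψ₁)ᶜ, F =ᶠ[nhds x] 0 := by
    intro x hx
    filter_upwards [hW₁.mem_nhds hx] with y hy using hFzero y hy
  have hFdiff : Differentiable ℝ F := by
    intro x
    rcases hcov x with hx | hx
    · exact ((hFcd.differentiableOn (by simp)).differentiableAt (hU.mem_nhds hx))
    · exact (differentiableAt_const 0).congr_of_eventuallyEq (hFev x hx)
  have hfdF0 : ∀ x ∈ (tsupport ψ₁)ᶜ, fderiv ℝ F x = 0 := by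
    intro x hx
    rw [(hFev x hx).fderiv_eq]
    exact fderiv_const_apply 0
  have hFcont : Continuous F := hFdiff.continuous
  have hFsupp : HasCompactSupport F := by
    apply HasCompactSupport.intro hc₁
    intro x hx
    exact hFzero x hx
  have hfdFcont : Continuous (fun x => fderiv ℝ F x v) := by
    apply cont_of_two_opens hU hW₁ hcov
    · exact (hFcd.continuousOn_fderiv_of_isOpen hU (by simp)).clm_apply continuousOn_const
    · exact (continuousOn_const (c := (0:ℂ))).congr (fun x hx => by rw [hfdF0 x hx]; rfl)
  have hfdFsupp : HasCompactSupport (fun x => fderiv ℝ F x v) := by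
    apply HasCompactSupport.intro hc₁
    intro x hx
    rw [hfdF0 x hx]; rfl
  -- the integral of the derivative of F vanishes
  have hIBP : ∫ x, fderiv ℝ F x v = 0 := by
    have h := integral_mul_fderiv_eq_neg_fderiv_mul_of_integrable
      (f := fun _ : Fin n → ℝ => (1 : ℂ)) (g := F) (v := v) (μ := volume)
      ?_ ?_ ?_ (fun x _ => differentiableAt_const _) (fun x _ => hFdiff x)
    · simpa using h
    · simp
    · simpa using hfdFcont.integrable_of_hasCompactSupport hfdFsupp
    · simpa using hFcont.integrable_of_hasCompactSupport hFsupp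
  -- reduce set integrals to full-space integrals
  have hred : ∀ (f : (Fin n → ℝ) → ℂ), (∀ x, x ∉ U → f x = 0) → (∫ x in U, f x) = ∫ x, f x :=
    fun f hf => setIntegral_eq_integral_of_forall_compl_eq_zero hf
  rw [hred _ (fun x hx => by simp [hz₁ x hx]), hred _ (fun x hx => by simp [hz₂ x hx])]
  -- continuity of pd-type functions on U
  have hpd : ∀ (φ : (Fin n → ℝ) → ℂ), ContDiffOn ℝ (⊤ : ℕ∞) φ U →
      ContinuousOn (fun x => fderiv ℝ φ x (Pi.single i 1)) U :=
    fun φ hφ => (hφ.continuousOn_fderiv_of_isOpen hU (by simp)).clm_apply continuousOn_const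
  have hnab : ∀ (φ : (Fin n → ℝ) → ℂ), ContDiffOn ℝ (⊤ : ℕ∞) φ U →
      ContinuousOn (fun x => nablaSA g i φ x) U := by
    intro φ hφ
    simp only [nablaSA, pd]
    exact (hpd φ hφ).add ((continuousOn_const.mul (hpd _ hLcd)).mul hφ.continuousOn)
  have hW₂ : IsOpen (tsupport ψ₂)ᶜ := (isClosed_tsupport ψ₂).isOpen_compl
  have hcov₂ : ∀ x, x ∈ U ∨ x ∈ (tsupport ψ₂)ᶜ := by
    intro x
    by_cases hx : x ∈ U
    · exact Or.inl hx
    · exact Or.inr (fun h => hx (hs₂ h))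
  have hIntA : Integrable (fun x => ((g x ^ (1 / 2 : ℝ) : ℝ) : ℂ) * (starRingEnd ℂ) (ψ₁ x) *
      (Complex.I * nablaSA g i ψ₂ x)) := by
    apply Continuous.integrable_of_hasCompactSupport
    · apply cont_of_two_opens hU hW₁ hcov
      · exact ((hScd.continuousOn.mul hconj₁cd.continuousOn).mul
          (continuousOn_const.mul (hnab ψ₂ hψ₂)))
      · exact (continuousOn_const (c := (0:ℂ))).congr
          (fun x hx => by simp [image_eq_zero_of_notMem_tsupport hx])
    · exact HasCompactSupport.intro hc₁
        (fun x hx => by simp [image_eq_zero_of_notMem_tsupport hx])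
  have hIntB : Integrable (fun x => ((g x ^ (1 / 2 : ℝ) : ℝ) : ℂ) *
      (starRingEnd ℂ) (Complex.I * nablaSA g i ψ₁ x) * ψ₂ x) := by
    apply Continuous.integrable_of_hasCompactSupport
    · apply cont_of_two_opens hU hW₂ hcov₂
      · apply ((hScd.continuousOn.mul ?_).mul hψ₂.continuousOn)
        exact Complex.continuous_conj.comp_continuousOn (continuousOn_const.mul (hnab ψ₁ hψ₁))
      · exact (continuousOn_const (c := (0:ℂ))).congr
          (fun x hx => by simp [image_eq_zero_of_notMem_tsupport hx])
    · exact HasCompactSupport.intro hc₂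
        (fun x hx => by simp [image_eq_zero_of_notMem_tsupport hx])
  rw [← sub_eq_zero, ← integral_sub hIntA hIntB]
  have key : ∀ x, ((g x ^ (1 / 2 : ℝ) : ℝ) : ℂ) * (starRingEnd ℂ) (ψ₁ x) *
      (Complex.I * nablaSA g i ψ₂ x) - ((g x ^ (1 / 2 : ℝ) : ℝ) : ℂ) *
      (starRingEnd ℂ) (Complex.I * nablaSA g i ψ₁ x) * ψ₂ x
      = Complex.I * fderiv ℝ F x (Pi.single i 1) := by
    intro x
    by_cases hx : x ∈ U
    · -- the main computation
      have hr : 0 < g x := hgpos x hx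
      have hgd : HasFDerivAt g (fderiv ℝ g x) x :=
        ((hg.contDiffAt (hU.mem_nhds hx)).differentiableAt (by simp)).hasFDerivAt
      have hψ₁d : HasFDerivAt ψ₁ (fderiv ℝ ψ₁ x) x :=
        ((hψ₁.contDiffAt (hU.mem_nhds hx)).differentiableAt (by simp)).hasFDerivAt
      have hψ₂d : HasFDerivAt ψ₂ (fderiv ℝ ψ₂ x) x :=
        ((hψ₂.contDiffAt (hU.mem_nhds hx)).differentiableAt (by simp)).hasFDerivAt
      have hL : HasFDerivAt (fun y => (Real.log (g y) : ℂ))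
          (Complex.ofRealCLM.comp ((g x)⁻¹ • fderiv ℝ g x)) x :=
        Complex.ofRealCLM.hasFDerivAt.comp x
          ((Real.hasDerivAt_log hr.ne').comp_hasFDerivAt x hgd)
      have hLval : pd i (fun y => (Real.log (g y) : ℂ)) x
          = (((g x)⁻¹ * fderiv ℝ g x (Pi.single i 1) : ℝ) : ℂ) := by
        rw [pd, hL.fderiv]; simp
      have hSd : HasFDerivAt S (Complex.ofRealCLM.comp
          (((1 / 2 : ℝ) * g x ^ ((1 / 2 : ℝ) - 1)) • fderiv ℝ g x)) x :=
        Complex.ofRealCLM.hasFDerivAt.comp x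
          ((Real.hasDerivAt_rpow_const (p := (1/2 : ℝ)) (Or.inl hr.ne')).comp_hasFDerivAt x hgd)
      have hconjd : HasFDerivAt (fun y => (starRingEnd ℂ) (ψ₁ y))
          ((((starL' ℝ : ℂ ≃L[ℝ] ℂ) : ℂ →L[ℝ] ℂ)) ∘L fderiv ℝ ψ₁ x) x := hψ₁d.star
      have hFd : HasFDerivAt F
          ((S x * (starRingEnd ℂ) (ψ₁ x)) • fderiv ℝ ψ₂ x +
            ψ₂ x • (S x • ((((starL' ℝ : ℂ ≃L[ℝ] ℂ) : ℂ →L[ℝ] ℂ)) ∘L fderiv ℝ ψ₁ x)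
              + (starRingEnd ℂ) (ψ₁ x) • (Complex.ofRealCLM.comp
                  (((1 / 2 : ℝ) * g x ^ ((1 / 2 : ℝ) - 1)) • fderiv ℝ g x)))) x :=
        (hSd.mul hconjd).mul hψ₂d
      have hFval : fderiv ℝ F x (Pi.single i 1)
          = S x * (starRingEnd ℂ) (ψ₁ x) * fderiv ℝ ψ₂ x (Pi.single i 1)
            + ψ₂ x * (S x * (starRingEnd ℂ) (fderiv ℝ ψ₁ x (Pi.single i 1))
              + (starRingEnd ℂ) (ψ₁ x) *
                (((1 / 2 : ℝ) * g x ^ ((1 / 2 : ℝ) - 1) * fderiv ℝ g x (Pi.single i 1) : ℝ) : ℂ)) := by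
        rw [hFd.fderiv]
        simp [smul_eq_mul, mul_comm, mul_assoc, mul_left_comm, starL'_apply]
        ring
      -- the real-number identity between the coefficients
      have hkeyR : (1 / 2 : ℝ) * g x ^ ((1 / 2 : ℝ) - 1) * fderiv ℝ g x (Pi.single i 1)
          = (1 / 2 : ℝ) * ((g x)⁻¹ * fderiv ℝ g x (Pi.single i 1)) * g x ^ (1 / 2 : ℝ) := by
        rw [Real.rpow_sub hr, Real.rpow_one]
        field_simp
      simp only [nablaSA, hLval]
      rw [hFval, hkeyR]
      simp only [pd, map_add, map_mul, map_div₀, map_one, map_ofNat, Complex.conj_I, Complex.conj_ofReal, hSdef]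
      push_cast
      ring
    · -- off U everything vanishes
      have hx₁ : x ∉ tsupport ψ₁ := fun h => hx (hs₁ h)
      rw [hfdF0 x hx₁]
      simp [hz₁ x hx, hz₂ x hx]
  simp_rw [key]
  rw [MeasureTheory.integral_const_mul, hIBP, mul_zero]
end

section
/- Let U ⊆ ℝⁿ be open, let G : U → ℝ be smooth with G > 0, and let (ã^{ij}) be a smooth field of symmetric real n×n matrices on U. Define Δψ := G^{-1/2}·∑_{i,j} ∂_i( G^{1/2}·ã^{ij}·∂_j ψ ) on smooth ψ : U → ℂ. Then for every smooth ψ : U → ℂ: G^{1/4}·Δ( G^{-1/4}·ψ ) = ∑_{i,j} ∂_i( ã^{ij}·∂_j ψ ) − [ (1/4)∑_{i,j}(∂_i ã^{ij})(∂_j log G) + (1/4)∑_{i,j} ã^{ij}·∂_i∂_j log G + (1/16)∑_{i,j} ã^{ij}·(∂_i log G)(∂_j log G) ]·ψ. -/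
open scoped BigOperators

/-- The Beltrami–Laplace operator
`Δψ = G^{-1/2}·∑_{i,j} ∂_i(G^{1/2}·ã^{ij}·∂_j ψ)` in a local chart. -/
noncomputable def laplaceBeltrami {n : ℕ} (G : (Fin n → ℝ) → ℝ)
    (a : (Fin n → ℝ) → Fin n → Fin n → ℝ)
    (ψ : (Fin n → ℝ) → ℂ) (x : Fin n → ℝ) : ℂ :=
  ((G x ^ (-(1 / 2 : ℝ)) : ℝ) : ℂ) *
    ∑ i, ∑ j, pd i (fun y => ((G y ^ (1 / 2 : ℝ) * a y i j : ℝ) : ℂ) * pd j ψ y) x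

/- STATEMENT 9 (Corollary 3.25(1)): the conjugated (hermitianized) operator
σ̃(Δ) = G^{1/4} Δ G^{-1/4} equals the divergence-form operator ∂_i ã^{ij} ∂_j
plus an explicit zeroth-order potential. -/
noncomputable def pdR {n : ℕ} (i : Fin n) (f : (Fin n → ℝ) → ℝ) (x : Fin n → ℝ) : ℝ :=
  fderiv ℝ f x (Pi.single i 1)

variable {n : ℕ} {i j : Fin n} {x : Fin n → ℝ}

theorem pd_congr {f g : (Fin n → ℝ) → ℂ} (h : f =ᶠ[nhds x] g) :
    pd i f x = pd i g x := by
  unfold pd; rw [h.fderiv_eq]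

theorem pd_ofReal {f : (Fin n → ℝ) → ℝ} (hf : DifferentiableAt ℝ f x) :
    pd i (fun y => ((f y : ℝ) : ℂ)) x = ((pdR i f x : ℝ) : ℂ) := by
  unfold pd pdR
  have : (fun y => ((f y : ℝ) : ℂ)) = (⇑Complex.ofRealCLM ∘ f) := rfl
  rw [this, (Complex.ofRealCLM.hasFDerivAt.comp x hf.hasFDerivAt).fderiv]
  rfl

theorem pd_mul {f g : (Fin n → ℝ) → ℂ} (hf : DifferentiableAt ℝ f x)
    (hg : DifferentiableAt ℝ g x) :
    pd i (fun y => f y * g y) x = pd i f x * g x + f x * pd i g x := by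
  unfold pd
  rw [fderiv_fun_mul hf hg]
  simp [smul_eq_mul]; ring

theorem pd_sub {f g : (Fin n → ℝ) → ℂ} (hf : DifferentiableAt ℝ f x)
    (hg : DifferentiableAt ℝ g x) :
    pd i (fun y => f y - g y) x = pd i f x - pd i g x := by
  unfold pd; rw [fderiv_fun_sub hf hg]; rfl

theorem pd_const_mul {g : (Fin n → ℝ) → ℂ} (c : ℂ) (hg : DifferentiableAt ℝ g x) :
    pd i (fun y => c * g y) x = c * pd i g x := by
  unfold pd; rw [fderiv_const_mul hg]; rfl

theorem pdR_rpow {f : (Fin n → ℝ) → ℝ} {c : ℝ} (hf : DifferentiableAt ℝ f x) (h0 : f x ≠ 0) :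
    pdR i (fun y => f y ^ c) x = c * f x ^ (c - 1) * pdR i f x := by
  unfold pdR
  rw [(hf.hasFDerivAt.rpow_const (Or.inl h0)).fderiv]
  simp [smul_eq_mul]

theorem pdR_log {f : (Fin n → ℝ) → ℝ} (hf : DifferentiableAt ℝ f x) (h0 : f x ≠ 0) :
    pdR i (fun y => Real.log (f y)) x = pdR i f x / f x := by
  unfold pdR
  rw [(hf.hasFDerivAt.log h0).fderiv]
  simp [smul_eq_mul, div_eq_inv_mul]

theorem contDiffOn_pd {f : (Fin n → ℝ) → ℂ} {U : Set (Fin n → ℝ)} (hU : IsOpen U)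
    (hf : ContDiffOn ℝ (⊤ : ℕ∞) f U) : ContDiffOn ℝ (⊤ : ℕ∞) (fun y => pd j f y) U := by
  have h := (hf.fderiv_of_isOpen hU (m := (⊤ : ℕ∞)) (by simp)).clm_apply
    (contDiffOn_const (c := Pi.single j (1:ℝ)))
  exact h

theorem contDiffOn_pdR {f : (Fin n → ℝ) → ℝ} {U : Set (Fin n → ℝ)} (hU : IsOpen U)
    (hf : ContDiffOn ℝ (⊤ : ℕ∞) f U) : ContDiffOn ℝ (⊤ : ℕ∞) (fun y => pdR j f y) U := by
  have h := (hf.fderiv_of_isOpen hU (m := (⊤ : ℕ∞)) (by simp)).clm_apply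
    (contDiffOn_const (c := Pi.single j (1:ℝ)))
  exact h

theorem sum_algebra {n : ℕ} (A aa M S : Fin n → Fin n → ℂ) (L P : Fin n → ℂ) (ψ0 : ℂ)
    (hsymm : ∀ i j, aa i j = aa j i) :
    ∑ i, ∑ j, ((1/4 : ℂ) * L i * (aa i j * (P j - (1/4 : ℂ) * L j * ψ0))
        + (A i j * (P j - (1/4 : ℂ) * L j * ψ0)
          + aa i j * (S i j - ((1/4 : ℂ) * (M i j * ψ0) + (1/4 : ℂ) * (L j * P i)))))
      = (∑ i, ∑ j, (A i j * P j + aa i j * S i j))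
        - ((1/4 : ℂ) * ∑ i, ∑ j, A i j * L j
            + (1/4 : ℂ) * ∑ i, ∑ j, aa i j * M i j
            + (1/16 : ℂ) * ∑ i, ∑ j, aa i j * (L i * L j)) * ψ0 := by
  have hswap : ∑ i, ∑ j, aa i j * (L i * P j) = ∑ i, ∑ j, aa i j * (L j * P i) := by
    rw [Finset.sum_comm]
    exact Finset.sum_congr rfl fun i _ => Finset.sum_congr rfl fun j _ => by rw [hsymm]
  have step1 : ∀ i j : Fin n,
      (1/4 : ℂ) * L i * (aa i j * (P j - (1/4 : ℂ) * L j * ψ0))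
        + (A i j * (P j - (1/4 : ℂ) * L j * ψ0)
          + aa i j * (S i j - ((1/4 : ℂ) * (M i j * ψ0) + (1/4 : ℂ) * (L j * P i))))
      = ((A i j * P j + aa i j * S i j)
          - ((1/4 : ℂ) * (A i j * L j) + (1/4 : ℂ) * (aa i j * M i j)
              + (1/16 : ℂ) * (aa i j * (L i * L j))) * ψ0)
        + (1/4 : ℂ) * (aa i j * (L i * P j)) - (1/4 : ℂ) * (aa i j * (L j * P i)) := by
    intro i j; ring
  calc ∑ i, ∑ j, ((1/4 : ℂ) * L i * (aa i j * (P j - (1/4 : ℂ) * L j * ψ0))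
        + (A i j * (P j - (1/4 : ℂ) * L j * ψ0)
          + aa i j * (S i j - ((1/4 : ℂ) * (M i j * ψ0) + (1/4 : ℂ) * (L j * P i)))))
      = ∑ i, ∑ j, (((A i j * P j + aa i j * S i j)
          - ((1/4 : ℂ) * (A i j * L j) + (1/4 : ℂ) * (aa i j * M i j)
              + (1/16 : ℂ) * (aa i j * (L i * L j))) * ψ0)
        + (1/4 : ℂ) * (aa i j * (L i * P j)) - (1/4 : ℂ) * (aa i j * (L j * P i))) := by
        exact Finset.sum_congr rfl fun i _ => Finset.sum_congr rfl fun j _ => step1 i j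
    _ = (∑ i, ∑ j, ((A i j * P j + aa i j * S i j)
          - ((1/4 : ℂ) * (A i j * L j) + (1/4 : ℂ) * (aa i j * M i j)
              + (1/16 : ℂ) * (aa i j * (L i * L j))) * ψ0))
        + (1/4 : ℂ) * (∑ i, ∑ j, aa i j * (L i * P j))
        - (1/4 : ℂ) * (∑ i, ∑ j, aa i j * (L j * P i)) := by
        simp [Finset.sum_add_distrib, Finset.sum_sub_distrib, Finset.mul_sum]
    _ = ∑ i, ∑ j, ((A i j * P j + aa i j * S i j)
          - ((1/4 : ℂ) * (A i j * L j) + (1/4 : ℂ) * (aa i j * M i j)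
              + (1/16 : ℂ) * (aa i j * (L i * L j))) * ψ0) := by
        rw [hswap]; ring
    _ = (∑ i, ∑ j, (A i j * P j + aa i j * S i j))
        - ((1/4 : ℂ) * ∑ i, ∑ j, A i j * L j
            + (1/4 : ℂ) * ∑ i, ∑ j, aa i j * M i j
            + (1/16 : ℂ) * ∑ i, ∑ j, aa i j * (L i * L j)) * ψ0 := by
        simp [Finset.sum_sub_distrib, Finset.sum_add_distrib, Finset.mul_sum, Finset.sum_mul,
          add_mul]

theorem diff_ofReal {n : ℕ} {x : Fin n → ℝ} {f : (Fin n → ℝ) → ℝ}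
    (hf : DifferentiableAt ℝ f x) :
    DifferentiableAt ℝ (fun y => ((f y : ℝ) : ℂ)) x :=
  Complex.ofRealCLM.differentiableAt.comp x hf


theorem conjugated_laplaceBeltrami {n : ℕ} (U : Set (Fin n → ℝ)) (hU : IsOpen U)
    (G : (Fin n → ℝ) → ℝ) (hG : ContDiffOn ℝ (⊤ : ℕ∞) G U) (hGpos : ∀ x ∈ U, 0 < G x)
    (a : (Fin n → ℝ) → Fin n → Fin n → ℝ)
    (ha : ∀ i j, ContDiffOn ℝ (⊤ : ℕ∞) (fun x => a x i j) U)
    (hasymm : ∀ x ∈ U, ∀ i j, a x i j = a x j i)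
    (ψ : (Fin n → ℝ) → ℂ) (hψ : ContDiffOn ℝ (⊤ : ℕ∞) ψ U)
    (x : Fin n → ℝ) (hx : x ∈ U) :
    ((G x ^ (1 / 4 : ℝ) : ℝ) : ℂ) *
        laplaceBeltrami G a (fun y => ((G y ^ (-(1 / 4 : ℝ)) : ℝ) : ℂ) * ψ y) x
      = (∑ i, ∑ j, pd i (fun y => ((a y i j : ℝ) : ℂ) * pd j ψ y) x)
        - ((1 / 4 : ℂ) * ∑ i, ∑ j,
              pd i (fun y => ((a y i j : ℝ) : ℂ)) x *
                pd j (fun y => (Real.log (G y) : ℂ)) x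
            + (1 / 4 : ℂ) * ∑ i, ∑ j, ((a x i j : ℝ) : ℂ) *
                pd i (fun y => pd j (fun z => (Real.log (G z) : ℂ)) y) x
            + (1 / 16 : ℂ) * ∑ i, ∑ j, ((a x i j : ℝ) : ℂ) *
                (pd i (fun y => (Real.log (G y) : ℂ)) x *
                 pd j (fun y => (Real.log (G y) : ℂ)) x)) * ψ x := by

  have hUx : ∀ᶠ y in nhds x, y ∈ U := hU.eventually_mem hx
  have hGne : ∀ y ∈ U, G y ≠ 0 := fun y hy => (hGpos y hy).ne'
  have hGd : ∀ y ∈ U, DifferentiableAt ℝ G y := fun y hy =>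
    (hG.contDiffAt (hU.mem_nhds hy)).differentiableAt (by simp)
  have hψd : ∀ y ∈ U, DifferentiableAt ℝ ψ y := fun y hy =>
    (hψ.contDiffAt (hU.mem_nhds hy)).differentiableAt (by simp)
  have had : ∀ (i j : Fin n), ∀ y ∈ U, DifferentiableAt ℝ (fun z => a z i j) y :=
    fun i j y hy => ((ha i j).contDiffAt (hU.mem_nhds hy)).differentiableAt (by simp)
  have hGx := hGpos x hx
  have hld : ∀ j : Fin n, DifferentiableAt ℝ (fun y => pdR j G y / G y) x := fun j =>
    (((contDiffOn_pdR hU hG).div hG hGne).contDiffAt (hU.mem_nhds hx)).differentiableAt (by simp)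
  have hpdψd : ∀ j : Fin n, DifferentiableAt ℝ (fun y => pd j ψ y) x := fun j =>
    ((contDiffOn_pd hU hψ).contDiffAt (hU.mem_nhds hx)).differentiableAt (by simp)
  -- Step A: derivative of the conjugated function
  have stepA : ∀ (j : Fin n), ∀ y ∈ U,
      pd j (fun z => ((G z ^ (-(1 / 4 : ℝ)) : ℝ) : ℂ) * ψ z) y
        = ((G y ^ (-(1 / 4 : ℝ)) : ℝ) : ℂ) *
            (pd j ψ y - (1 / 4 : ℂ) * ((pdR j G y / G y : ℝ) : ℂ) * ψ y) := by
    intro j y hy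
    have hrd : DifferentiableAt ℝ (fun z => G z ^ (-(1 / 4 : ℝ))) y :=
      (hGd y hy).rpow_const (Or.inl (hGne y hy))
    rw [pd_mul (diff_ofReal hrd) (hψd y hy), pd_ofReal hrd,
      pdR_rpow (hGd y hy) (hGne y hy)]
    have h1 : G y ^ (-(1 / 4 : ℝ) - 1) = G y ^ (-(1 / 4 : ℝ)) / G y := by
      rw [Real.rpow_sub (hGpos y hy), Real.rpow_one]
    rw [h1]
    have h0 : (G y : ℂ) ≠ 0 := Complex.ofReal_ne_zero.mpr (hGne y hy)
    push_cast
    field_simp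
    ring
  -- differentiability of g i j at x
  have hgd : ∀ (i j : Fin n), DifferentiableAt ℝ
      (fun y => ((a y i j : ℝ) : ℂ) *
        (pd j ψ y - (1 / 4 : ℂ) * ((pdR j G y / G y : ℝ) : ℂ) * ψ y)) x := by
    intro i j
    exact (diff_ofReal (had i j x hx)).mul ((hpdψd j).sub
      (((differentiableAt_const _).mul (diff_ofReal (hld j))).mul (hψd x hx)))
  -- pd of g at x, expanded
  have hpdg : ∀ (i j : Fin n),
      pd i (fun y => ((a y i j : ℝ) : ℂ) *
          (pd j ψ y - (1 / 4 : ℂ) * ((pdR j G y / G y : ℝ) : ℂ) * ψ y)) x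
        = ((pdR i (fun z => a z i j) x : ℝ) : ℂ) *
            (pd j ψ x - (1 / 4 : ℂ) * ((pdR j G x / G x : ℝ) : ℂ) * ψ x)
          + ((a x i j : ℝ) : ℂ) *
            (pd i (fun y => pd j ψ y) x
              - ((1 / 4 : ℂ) * (((pdR i (fun y => pdR j G y / G y) x : ℝ) : ℂ) * ψ x)
                + (1 / 4 : ℂ) * (((pdR j G x / G x : ℝ) : ℂ) * pd i ψ x))) := by
    intro i j
    have hre : (fun y => (1 / 4 : ℂ) * ((pdR j G y / G y : ℝ) : ℂ) * ψ y)
        = fun y => (1 / 4 : ℂ) * (((pdR j G y / G y : ℝ) : ℂ) * ψ y) := by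
      funext y; ring
    rw [pd_mul (g := fun y => pd j ψ y - (1 / 4 : ℂ) * ((pdR j G y / G y : ℝ) : ℂ) * ψ y)
        (diff_ofReal (had i j x hx)) ((hpdψd j).sub
        (((differentiableAt_const _).mul (diff_ofReal (hld j))).mul (hψd x hx))),
      pd_ofReal (had i j x hx),
      pd_sub (g := fun y => (1 / 4 : ℂ) * ((pdR j G y / G y : ℝ) : ℂ) * ψ y)
        (hpdψd j) (((differentiableAt_const _).mul (diff_ofReal (hld j))).mul (hψd x hx)),
      hre, pd_const_mul (g := fun y => ((pdR j G y / G y : ℝ) : ℂ) * ψ y) _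
        ((diff_ofReal (hld j)).mul (hψd x hx)),
      pd_mul (diff_ofReal (hld j)) (hψd x hx), pd_ofReal (hld j)]
    ring
  -- LHS computation
  have hLHS : ((G x ^ (1 / 4 : ℝ) : ℝ) : ℂ) *
        laplaceBeltrami G a (fun y => ((G y ^ (-(1 / 4 : ℝ)) : ℝ) : ℂ) * ψ y) x
      = ∑ i, ∑ j, ((1 / 4 : ℂ) * ((pdR i G x / G x : ℝ) : ℂ) *
            (((a x i j : ℝ) : ℂ) *
              (pd j ψ x - (1 / 4 : ℂ) * ((pdR j G x / G x : ℝ) : ℂ) * ψ x))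
          + (((pdR i (fun z => a z i j) x : ℝ) : ℂ) *
              (pd j ψ x - (1 / 4 : ℂ) * ((pdR j G x / G x : ℝ) : ℂ) * ψ x)
            + ((a x i j : ℝ) : ℂ) *
              (pd i (fun y => pd j ψ y) x
                - ((1 / 4 : ℂ) * (((pdR i (fun y => pdR j G y / G y) x : ℝ) : ℂ) * ψ x)
                  + (1 / 4 : ℂ) * (((pdR j G x / G x : ℝ) : ℂ) * pd i ψ x))))) := by
    simp only [laplaceBeltrami]
    rw [Finset.mul_sum, Finset.mul_sum]
    simp only [Finset.mul_sum]
    refine Finset.sum_congr rfl fun i _ => Finset.sum_congr rfl fun j _ => ?_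
    -- rewrite the integrand as G^{1/4} * g near x
    have hBe : (fun y => ((G y ^ (1 / 2 : ℝ) * a y i j : ℝ) : ℂ) *
          pd j (fun z => ((G z ^ (-(1 / 4 : ℝ)) : ℝ) : ℂ) * ψ z) y)
        =ᶠ[nhds x] (fun y => ((G y ^ (1 / 4 : ℝ) : ℝ) : ℂ) *
          (((a y i j : ℝ) : ℂ) *
            (pd j ψ y - (1 / 4 : ℂ) * ((pdR j G y / G y : ℝ) : ℂ) * ψ y))) := by
      filter_upwards [hUx] with y hy
      rw [stepA j y hy]
      have key : ((G y ^ (1 / 2 : ℝ) * a y i j : ℝ) : ℂ) * ((G y ^ (-(1 / 4 : ℝ)) : ℝ) : ℂ)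
          = ((G y ^ (1 / 4 : ℝ) : ℝ) : ℂ) * ((a y i j : ℝ) : ℂ) := by
        rw [← Complex.ofReal_mul, ← Complex.ofReal_mul]
        congr 1
        rw [mul_right_comm, ← Real.rpow_add (hGpos y hy)]
        norm_num
      linear_combination
        (pd j ψ y - (1 / 4 : ℂ) * ((pdR j G y / G y : ℝ) : ℂ) * ψ y) * key
    rw [pd_congr hBe,
      pd_mul (diff_ofReal ((hGd x hx).rpow_const (Or.inl (hGne x hx)))) (hgd i j),
      pd_ofReal ((hGd x hx).rpow_const (Or.inl (hGne x hx))),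
      pdR_rpow (hGd x hx) (hGne x hx), hpdg i j]
    -- now pure scalar identity using rpow arithmetic
    have e1 : G x ^ (1 / 4 : ℝ) * (G x ^ (-(1 / 2 : ℝ)) *
          (1 / 4 * G x ^ ((1 / 4 : ℝ) - 1) * pdR i G x))
        = 1 / 4 * (pdR i G x / G x) := by
      have h2 : G x ^ (1 / 4 : ℝ) * (G x ^ (-(1 / 2 : ℝ)) * G x ^ ((1 / 4 : ℝ) - 1))
          = (G x)⁻¹ := by
        rw [← Real.rpow_add hGx, ← Real.rpow_add hGx,
          show ((1 : ℝ) / 4 + (-(1 / 2) + (1 / 4 - 1))) = -1 by norm_num,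
          Real.rpow_neg_one]
      calc G x ^ (1 / 4 : ℝ) * (G x ^ (-(1 / 2 : ℝ)) *
            (1 / 4 * G x ^ ((1 / 4 : ℝ) - 1) * pdR i G x))
          = (G x ^ (1 / 4 : ℝ) * (G x ^ (-(1 / 2 : ℝ)) * G x ^ ((1 / 4 : ℝ) - 1))) *
            (1 / 4 * pdR i G x) := by ring
        _ = (G x)⁻¹ * (1 / 4 * pdR i G x) := by rw [h2]
        _ = 1 / 4 * (pdR i G x / G x) := by ring
    have e2 : G x ^ (1 / 4 : ℝ) * (G x ^ (-(1 / 2 : ℝ)) * G x ^ (1 / 4 : ℝ)) = 1 := by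
      rw [← Real.rpow_add hGx, ← Real.rpow_add hGx]
      norm_num
    have E1 := congrArg (Complex.ofReal) e1
    have E2 := congrArg (Complex.ofReal) e2
    push_cast at E1 E2
    push_cast
    linear_combination
      (((a x i j : ℝ) : ℂ) *
        (pd j ψ x - (1 / 4 : ℂ) * (((pdR j G x : ℝ) : ℂ) / ((G x : ℝ) : ℂ)) * ψ x)) * E1 +
      (((pdR i (fun z => a z i j) x : ℝ) : ℂ) *
          (pd j ψ x - (1 / 4 : ℂ) * (((pdR j G x : ℝ) : ℂ) / ((G x : ℝ) : ℂ)) * ψ x)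
        + ((a x i j : ℝ) : ℂ) *
          (pd i (fun y => pd j ψ y) x
            - ((1 / 4 : ℂ) * (((pdR i (fun y => pdR j G y / G y) x : ℝ) : ℂ) * ψ x)
              + (1 / 4 : ℂ) * ((((pdR j G x : ℝ) : ℂ) / ((G x : ℝ) : ℂ)) * pd i ψ x)))) * E2
  -- RHS conversions
  have hlog : ∀ (j : Fin n), ∀ y ∈ U, pd j (fun z => (Real.log (G z) : ℂ)) y
      = ((pdR j G y / G y : ℝ) : ℂ) := by
    intro j y hy
    rw [pd_ofReal ((hGd y hy).log (hGne y hy)), pdR_log (hGd y hy) (hGne y hy)]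
  have hR1 : ∀ (i j : Fin n), pd i (fun y => ((a y i j : ℝ) : ℂ) * pd j ψ y) x
      = ((pdR i (fun z => a z i j) x : ℝ) : ℂ) * pd j ψ x
        + ((a x i j : ℝ) : ℂ) * pd i (fun y => pd j ψ y) x := by
    intro i j
    rw [pd_mul (diff_ofReal (had i j x hx)) (hpdψd j), pd_ofReal (had i j x hx)]
  have hR2 : ∀ (i j : Fin n), pd i (fun y => ((a y i j : ℝ) : ℂ)) x
      = ((pdR i (fun z => a z i j) x : ℝ) : ℂ) := fun i j => pd_ofReal (had i j x hx)
  have hR4 : ∀ (i j : Fin n),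
      pd i (fun y => pd j (fun z => (Real.log (G z) : ℂ)) y) x
        = ((pdR i (fun y => pdR j G y / G y) x : ℝ) : ℂ) := by
    intro i j
    have he : (fun y => pd j (fun z => (Real.log (G z) : ℂ)) y)
        =ᶠ[nhds x] fun y => ((pdR j G y / G y : ℝ) : ℂ) := by
      filter_upwards [hUx] with y hy using hlog j y hy
    rw [pd_congr he, pd_ofReal (hld j)]
  rw [hLHS]
  simp only [hR1, hR2, hR4, show ∀ j : Fin n, pd j (fun z => (Real.log (G z) : ℂ)) x
    = ((pdR j G x / G x : ℝ) : ℂ) from fun j => hlog j x hx]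
  exact sum_algebra (fun i j => ((pdR i (fun z => a z i j) x : ℝ) : ℂ))
    (fun i j => ((a x i j : ℝ) : ℂ))
    (fun i j => ((pdR i (fun y => pdR j G y / G y) x : ℝ) : ℂ))
    (fun i j => pd i (fun y => pd j ψ y) x)
    (fun j => ((pdR j G x / G x : ℝ) : ℂ)) (fun j => pd j ψ x) (ψ x)
    (fun i j => congrArg Complex.ofReal (hasymm x hx i j))
end

section
/- Let V ⊆ ℝᵏ be open, X : V → ℝⁿ smooth with first fundamental form g_{αβ}(s) := ⟨∂_α X(s), ∂_β X(s)⟩, and let e_{α̇} : V → ℝⁿ (α̇ = k+1,…,n) be smooth fields satisfying ∂_α e_{α̇}(s) = ∑_β γ^{β}_{α̇α}(s)·∂_β X(s) for smooth functions γ^{β}_{α̇α} (Weingarten coefficients of a parallel normal frame). Define Y(s,q) := X(s) + ∑_{α̇} q^{α̇} e_{α̇}(s). Then for all (s,q) ∈ V × ℝ^{n−k} and all α, β: ⟨∂_{s^{α}} Y, ∂_{s^{β}} Y⟩ = g_{αβ} + ∑_{α̇} [ ∑_γ γ^{γ}_{α̇α} g_{γβ} + ∑_γ g_{αγ} γ^{γ}_{α̇β}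 ]·q^{α̇} + ∑_{α̇,β̇} [ ∑_{γ,δ} γ^{δ}_{α̇α} g_{δγ} γ^{γ}_{β̇β} ]·q^{α̇} q^{β̇}. -/
open scoped BigOperators

/-- Euclidean inner product on `ℝⁿ`. -/
noncomputable def dot {n : ℕ} (a b : Fin n → ℝ) : ℝ := ∑ i, a i * b i

/-- Partial derivative `∂_α F (s)` of a vector-valued map `F : ℝᵏ → ℝⁿ`. -/
noncomputable def pdv {k n : ℕ} (α : Fin k) (F : (Fin k → ℝ) → Fin n → ℝ)
    (s : Fin k → ℝ) : Fin n → ℝ :=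
  fderiv ℝ F s (Pi.single α 1)


lemma dot_add_left {n : ℕ} (a b c : Fin n → ℝ) : dot (a + b) c = dot a c + dot b c := by
  simp [dot, add_mul, Finset.sum_add_distrib]

lemma dot_add_right {n : ℕ} (a b c : Fin n → ℝ) : dot a (b + c) = dot a b + dot a c := by
  simp [dot, mul_add, Finset.sum_add_distrib]

lemma dot_smul_left {n : ℕ} (r : ℝ) (a b : Fin n → ℝ) : dot (r • a) b = r * dot a b := by
  simp [dot, Finset.mul_sum, mul_assoc]

lemma dot_smul_right {n : ℕ} (r : ℝ) (a b : Fin n → ℝ) : dot a (r • b) = r * dot a b := by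
  simp [dot, Finset.mul_sum, mul_left_comm]

lemma dot_sum_left {n : ℕ} {ι : Type*} (t : Finset ι) (f : ι → Fin n → ℝ) (b : Fin n → ℝ) :
    dot (∑ i ∈ t, f i) b = ∑ i ∈ t, dot (f i) b := by
  simp only [dot, Finset.sum_apply, Finset.sum_mul]
  exact Finset.sum_comm

lemma dot_sum_right {n : ℕ} {ι : Type*} (t : Finset ι) (f : ι → Fin n → ℝ) (a : Fin n → ℝ) :
    dot a (∑ i ∈ t, f i) = ∑ i ∈ t, dot a (f i) := by
  simp only [dot, Finset.sum_apply, Finset.mul_sum]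
  exact Finset.sum_comm

/- STATEMENT 14 (Corollary 4.14(1)): with a parallel normal frame whose
Weingarten coefficients are γ^β_{α̇α} (i.e. ∂_α e_{α̇} = ∑_β γ^β_{α̇α} ∂_β X),
the tangential block of the induced metric of the tubular neighborhood
Y(s,q) = X(s) + ∑ q^{α̇} e_{α̇}(s) is an exact quadratic polynomial in q:
⟨∂_{s^α}Y, ∂_{s^β}Y⟩ = g_{αβ} + ∑_{α̇} [∑_γ γ^γ_{α̇α} g_{γβ} + ∑_γ g_{αγ} γ^γ_{α̇β}] q^{α̇}
  + ∑_{α̇,β̇} [∑_{γ,δ} γ^δ_{α̇α} g_{δγ} γ^γ_{β̇β}] q^{α̇} q^{β̇}. -/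
theorem tubular_metric_tangential_block {k n d : ℕ} (V : Set (Fin k → ℝ))
    (hV : IsOpen V)
    (X : (Fin k → ℝ) → Fin n → ℝ) (hX : ContDiffOn ℝ (⊤ : ℕ∞) X V)
    (e : Fin d → (Fin k → ℝ) → Fin n → ℝ)
    (he : ∀ a, ContDiffOn ℝ (⊤ : ℕ∞) (e a) V)
    (γ : Fin d → Fin k → Fin k → (Fin k → ℝ) → ℝ)
    (hγ : ∀ s ∈ V, ∀ (a : Fin d) (α : Fin k),
      pdv α (e a) s = ∑ β, γ a β α s • pdv β X s)
    (g : Fin k → Fin k → (Fin k → ℝ) → ℝ)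
    (hg : ∀ s α β, g α β s = dot (pdv α X s) (pdv β X s))
    (Y : (Fin k → ℝ) → (Fin d → ℝ) → Fin n → ℝ)
    (hY : ∀ s q, Y s q = X s + ∑ a, q a • e a s) :
    ∀ s ∈ V, ∀ (q : Fin d → ℝ) (α β : Fin k),
      dot (fderiv ℝ (fun s' => Y s' q) s (Pi.single α 1))
          (fderiv ℝ (fun s' => Y s' q) s (Pi.single β 1))
        = g α β s
          + (∑ a, ((∑ γ', γ a γ' α s * g γ' β s) + ∑ γ', g α γ' s * γ a γ' β s) * q a)
          + ∑ a, ∑ b,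
              (∑ γ', ∑ δ, γ a δ α s * g δ γ' s * γ b γ' β s) * q a * q b := by
  intro s hs q α β
  have hDX : DifferentiableAt ℝ X s :=
    (hX.differentiableOn (by simp)).differentiableAt (hV.mem_nhds hs)
  have hDe : ∀ a, DifferentiableAt ℝ (e a) s := fun a =>
    ((he a).differentiableOn (by simp)).differentiableAt (hV.mem_nhds hs)
  have hfun : (fun s' => Y s' q) = fun s' => X s' + ∑ a, q a • e a s' := by
    funext s'; exact hY s' q
  have h1 : fderiv ℝ (fun s' => Y s' q) s
      = fderiv ℝ X s + ∑ a, q a • fderiv ℝ (e a) s := by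
    rw [hfun]
    rw [fderiv_fun_add hDX (DifferentiableAt.fun_sum fun a _ => (hDe a).fun_const_smul (q a))]
    congr 1
    rw [fderiv_fun_sum fun a _ => (hDe a).fun_const_smul (q a)]
    exact Finset.sum_congr rfl fun a _ => fderiv_fun_const_smul (hDe a) (q a)
  have hP : ∀ (α : Fin k), fderiv ℝ (fun s' => Y s' q) s (Pi.single α 1)
      = pdv α X s + ∑ a, q a • (∑ δ, γ a δ α s • pdv δ X s) := by
    intro α
    rw [h1]
    simp only [ContinuousLinearMap.add_apply, ContinuousLinearMap.coe_sum',
      Finset.sum_apply, ContinuousLinearMap.coe_smul', Pi.smul_apply]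
    congr 1
    refine Finset.sum_congr rfl fun a _ => ?_
    rw [← hγ s hs a α]; rfl
  rw [hP α, hP β]
  simp only [dot_add_left, dot_add_right, dot_sum_left, dot_sum_right,
    dot_smul_left, dot_smul_right]
  simp only [← hg s]
  simp only [mul_add, Finset.mul_sum, Finset.sum_mul, add_mul, Finset.sum_add_distrib]
  have hL1 : (∑ x : Fin d, ∑ i : Fin k, q x * (γ x i α s * g i β s))
      = ∑ x : Fin d, ∑ i : Fin k, γ x i α s * g i β s * q x :=
    Finset.sum_congr rfl fun a _ => Finset.sum_congr rfl fun i _ => by ring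
  have hL2 : (∑ x : Fin d, ∑ i : Fin k, q x * (γ x i β s * g α i s))
      = ∑ x : Fin d, ∑ i : Fin k, g α i s * γ x i β s * q x :=
    Finset.sum_congr rfl fun a _ => Finset.sum_congr rfl fun i _ => by ring
  have hQ : (∑ x : Fin d, ∑ x1 : Fin k, ∑ x2 : Fin d, ∑ i : Fin k,
        q x * (γ x x1 β s * (q x2 * (γ x2 i α s * g i x1 s))))
      = ∑ a : Fin d, ∑ b : Fin d, ∑ c : Fin k, ∑ i : Fin k,
        γ a i α s * g i c s * γ b c β s * q a * q b := by
    have h0 : ∀ x : Fin d, (∑ x1 : Fin k, ∑ x2 : Fin d, ∑ i : Fin k,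
          q x * (γ x x1 β s * (q x2 * (γ x2 i α s * g i x1 s))))
        = ∑ x2 : Fin d, ∑ x1 : Fin k, ∑ i : Fin k,
          q x * (γ x x1 β s * (q x2 * (γ x2 i α s * g i x1 s))) :=
      fun x => Finset.sum_comm
    simp only [h0]
    rw [Finset.sum_comm]
    exact Finset.sum_congr rfl fun a _ => Finset.sum_congr rfl fun b _ =>
      Finset.sum_congr rfl fun c _ => Finset.sum_congr rfl fun i _ => by ring
  rw [hL1, hL2, hQ]
  ring
end

section
/- Let I ⊆ ℝ be an open interval and κ₂, κ₃ : I → ℝ smooth. On the open set Ω := { (s, q₂, q₃) ∈ I × ℝ² : ρ(s,q₂,q₃) > 0 }, where ρ(s,q₂,q₃) := 1 − κ₂(s)q₂ − κ₃(s)q₃, define the Beltrami–Laplace operator of the metric ρ² ds² + dq₂² + dq₃² by Δ_T f := ρ^{-1}·[ ∂_s( ρ^{-1} ∂_s f ) + ∂_{q₂}( ρ ∂_{q₂} f ) + ∂_{q₃}( ρ ∂_{q₃} f ) ]. Then for every smooth ψ : I → ℂ and every s ∈ I: ρ^{1/2}·Δ_T( ρ^{-1/2}·(ψ ∘ pr₁)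 ) evaluated at (s, 0, 0) equals ψ″(s) + (1/4)·(κ₂(s)² + κ₃(s)²)·ψ(s), where pr₁(s,q₂,q₃) = s. Consequently the submanifold Schrödinger operator of a curve C ⊂ 𝔼³ is −Δ_{C↪𝔼³} = −∂_s² − (1/4)|κ_ℂ|². -/
/-- Partial derivative in the arclength coordinate `s`. -/
noncomputable def dS (f : ℝ × ℝ × ℝ → ℂ) (p : ℝ × ℝ × ℝ) : ℂ :=
  deriv (fun t => f (t, p.2.1, p.2.2)) p.1

/-- Partial derivative in the first normal coordinate `q₂`. -/
noncomputable def dQ₂ (f : ℝ × ℝ × ℝ → ℂ) (p : ℝ × ℝ × ℝ) : ℂ :=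
  deriv (fun t => f (p.1, t, p.2.2)) p.2.1

/-- Partial derivative in the second normal coordinate `q₃`. -/
noncomputable def dQ₃ (f : ℝ × ℝ × ℝ → ℂ) (p : ℝ × ℝ × ℝ) : ℂ :=
  deriv (fun t => f (p.1, p.2.1, t)) p.2.2

/-- `ρ(s,q₂,q₃) = 1 − κ₂(s)q₂ − κ₃(s)q₃`. -/
noncomputable def rho (κ₂ κ₃ : ℝ → ℝ) (p : ℝ × ℝ × ℝ) : ℝ :=
  1 - κ₂ p.1 * p.2.1 - κ₃ p.1 * p.2.2

/-- Beltrami–Laplace operator of the tube metric `ρ² ds² + dq₂² + dq₃²`: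
`Δ_T f = ρ⁻¹ [ ∂_s(ρ⁻¹ ∂_s f) + ∂_{q₂}(ρ ∂_{q₂} f) + ∂_{q₃}(ρ ∂_{q₃} f) ]`. -/
noncomputable def deltaT (κ₂ κ₃ : ℝ → ℝ) (f : ℝ × ℝ × ℝ → ℂ) (p : ℝ × ℝ × ℝ) : ℂ :=
  (((rho κ₂ κ₃ p)⁻¹ : ℝ) : ℂ) *
    (dS (fun p' => (((rho κ₂ κ₃ p')⁻¹ : ℝ) : ℂ) * dS f p') p
      + dQ₂ (fun p' => ((rho κ₂ κ₃ p' : ℝ) : ℂ) * dQ₂ f p') p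
      + dQ₃ (fun p' => ((rho κ₂ κ₃ p' : ℝ) : ℂ) * dQ₃ f p') p)

/-- Key 1D computation for the normal directions: the derivative at `0` of
`t ↦ (1 - a t) · ∂_t[(1 - a t)^{-1/2} c]` equals `(a²/4) c`. -/
lemma normal_term (a : ℝ) (c : ℂ) :
    deriv (fun t : ℝ => ((1 - a * t : ℝ) : ℂ) *
      deriv (fun u : ℝ => (((1 - a * u) ^ (-(1 : ℝ) / 2) : ℝ) : ℂ) * c) t) 0
    = ((a ^ 2 / 4 : ℝ) : ℂ) * c := by
  have hlin : ∀ t : ℝ, HasDerivAt (fun u : ℝ => 1 - a * u) (-a) t := by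
    intro t
    simpa using (((hasDerivAt_id t).const_mul a).const_sub (1 : ℝ))
  have hinner : ∀ t : ℝ, 0 < 1 - a * t →
      deriv (fun u : ℝ => (((1 - a * u) ^ (-(1 : ℝ) / 2) : ℝ) : ℂ) * c) t
      = (((a / 2) * (1 - a * t) ^ (-(3 : ℝ) / 2) : ℝ) : ℂ) * c := by
    intro t ht
    have h2 := (hlin t).rpow_const (p := -(1 : ℝ) / 2) (Or.inl (ne_of_gt ht))
    have h3 := (h2.ofReal_comp).mul_const c
    rw [h3.deriv]
    rw [show (-(1 : ℝ) / 2 - 1) = (-(3 : ℝ) / 2) by norm_num]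
    push_cast
    ring
  have hUopen : IsOpen {t : ℝ | 0 < 1 - a * t} :=
    isOpen_lt continuous_const (by fun_prop)
  have hU0 : (0 : ℝ) ∈ {t : ℝ | 0 < 1 - a * t} := by norm_num
  have heq : (fun t : ℝ => ((1 - a * t : ℝ) : ℂ) *
        deriv (fun u : ℝ => (((1 - a * u) ^ (-(1 : ℝ) / 2) : ℝ) : ℂ) * c) t)
      =ᶠ[nhds 0]
      (fun t : ℝ => (((a / 2) * (1 - a * t) ^ (-(1 : ℝ) / 2) : ℝ) : ℂ) * c) := by
    filter_upwards [hUopen.mem_nhds hU0] with t ht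
    rw [hinner t ht]
    have key : (1 - a * t) * (1 - a * t) ^ (-(3 : ℝ) / 2)
        = (1 - a * t) ^ (-(1 : ℝ) / 2) := by
      rw [show (-(1 : ℝ) / 2) = 1 + (-(3 : ℝ) / 2) by norm_num,
        Real.rpow_add ht, Real.rpow_one]
    push_cast [← key]
    ring
  rw [heq.deriv_eq]
  have h2 := (hlin 0).rpow_const (p := -(1 : ℝ) / 2)
    (Or.inl (by norm_num : (1 : ℝ) - a * 0 ≠ 0))
  have h3 := ((h2.const_mul (a / 2)).ofReal_comp).mul_const c
  rw [h3.deriv]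
  rw [show (1 : ℝ) - a * 0 = 1 by ring, Real.one_rpow]
  push_cast
  ring

/- STATEMENT 17 (Theorem 4.4(1)): for a unit-speed curve C ⊂ 𝔼³ with
parallel-frame curvatures κ₂, κ₃, the conjugated tube Laplacian restricted to
the curve gives the submanifold Schrödinger operator:
ρ^{1/2}·Δ_T(ρ^{-1/2}·ψ∘pr₁) |_{q=0} = ψ″ + (1/4)(κ₂² + κ₃²)ψ, i.e.
−Δ_{C↪𝔼³} = −∂_s² − (1/4)|κ_ℂ|². -/
theorem curve_submanifold_schroedinger (I : Set ℝ) (hI : IsOpen I)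
    (κ₂ κ₃ : ℝ → ℝ)
    (hκ₂ : ContDiffOn ℝ (⊤ : ℕ∞) κ₂ I) (hκ₃ : ContDiffOn ℝ (⊤ : ℕ∞) κ₃ I)
    (ψ : ℝ → ℂ) (hψ : ContDiffOn ℝ (⊤ : ℕ∞) ψ I)
    (s : ℝ) (hs : s ∈ I) :
    ((rho κ₂ κ₃ (s, 0, 0) ^ ((1 : ℝ) / 2) : ℝ) : ℂ) *
        deltaT κ₂ κ₃
          (fun p => ((rho κ₂ κ₃ p ^ (-(1 : ℝ) / 2) : ℝ) : ℂ) * ψ p.1) (s, 0, 0)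
      = deriv (deriv ψ) s
        + (1 / 4 : ℂ) * (((κ₂ s) ^ 2 + (κ₃ s) ^ 2 : ℝ) : ℂ) * ψ s := by
  set f : ℝ × ℝ × ℝ → ℂ :=
    fun p => ((rho κ₂ κ₃ p ^ (-(1 : ℝ) / 2) : ℝ) : ℂ) * ψ p.1 with hf
  have hline : (fun u : ℝ => f (u, (0 : ℝ), (0 : ℝ))) = ψ := by
    funext u; simp [hf, rho]
  have ht1 : dS (fun p' => (((rho κ₂ κ₃ p')⁻¹ : ℝ) : ℂ) * dS f p') ((s, 0, 0) : ℝ × ℝ × ℝ)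
      = deriv (deriv ψ) s := by
    have hfn : (fun t : ℝ => (((rho κ₂ κ₃ ((t, 0, 0) : ℝ × ℝ × ℝ))⁻¹ : ℝ) : ℂ)
        * deriv (fun u : ℝ => f (u, (0 : ℝ), (0 : ℝ))) t) = deriv ψ := by
      funext t
      rw [hline]
      simp [rho]
    simp only [dS]
    rw [hfn]
  have ht2 : dQ₂ (fun p' => ((rho κ₂ κ₃ p' : ℝ) : ℂ) * dQ₂ f p') ((s, 0, 0) : ℝ × ℝ × ℝ)
      = (((κ₂ s) ^ 2 / 4 : ℝ) : ℂ) * ψ s := by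
    have hfn : (fun t : ℝ => ((rho κ₂ κ₃ ((s, t, 0) : ℝ × ℝ × ℝ) : ℝ) : ℂ)
          * deriv (fun u : ℝ => f (s, u, (0 : ℝ))) t)
        = (fun t : ℝ => ((1 - κ₂ s * t : ℝ) : ℂ) *
            deriv (fun u : ℝ => (((1 - κ₂ s * u) ^ (-(1 : ℝ) / 2) : ℝ) : ℂ) * ψ s) t) := by
      funext t
      have hin : (fun u : ℝ => f (s, u, (0 : ℝ)))
          = (fun u : ℝ => (((1 - κ₂ s * u) ^ (-(1 : ℝ) / 2) : ℝ) : ℂ) * ψ s) := by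
        funext u; simp [hf, rho]
      rw [hin]
      simp [rho]
    simp only [dQ₂]
    rw [hfn]
    exact normal_term (κ₂ s) (ψ s)
  have ht3 : dQ₃ (fun p' => ((rho κ₂ κ₃ p' : ℝ) : ℂ) * dQ₃ f p') ((s, 0, 0) : ℝ × ℝ × ℝ)
      = (((κ₃ s) ^ 2 / 4 : ℝ) : ℂ) * ψ s := by
    have hfn : (fun t : ℝ => ((rho κ₂ κ₃ ((s, 0, t) : ℝ × ℝ × ℝ) : ℝ) : ℂ)
          * deriv (fun u : ℝ => f (s, (0 : ℝ), u)) t)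
        = (fun t : ℝ => ((1 - κ₃ s * t : ℝ) : ℂ) *
            deriv (fun u : ℝ => (((1 - κ₃ s * u) ^ (-(1 : ℝ) / 2) : ℝ) : ℂ) * ψ s) t) := by
      funext t
      have hin : (fun u : ℝ => f (s, (0 : ℝ), u))
          = (fun u : ℝ => (((1 - κ₃ s * u) ^ (-(1 : ℝ) / 2) : ℝ) : ℂ) * ψ s) := by
        funext u; simp [hf, rho]
      rw [hin]
      simp [rho]
    simp only [dQ₃]
    rw [hfn]
    exact normal_term (κ₃ s) (ψ s)
  have hρ0 : rho κ₂ κ₃ ((s, 0, 0) : ℝ × ℝ × ℝ) = 1 := by simp [rho]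
  simp only [deltaT, hρ0, ht1, ht2, ht3, Real.one_rpow, inv_one, Complex.ofReal_one, one_mul]
  push_cast
  ring
end
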